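/- Let T(G) be the total graph of G, whose vertices are the vertices and edges of G, with adjacency defined by adjacency or incidence in G. Then F(T(G)) = 8F(G) + ξ₄(G) + 3·ReZG(G). -/

import Mathlib

open SimpleGraph Finset
open scoped Classical

noncomputable section

/-- The generalized hierarchical product `G(U)ΠH`. -/
def hierProd {α β : Type*} (G : SimpleGraph α) (H : SimpleGraph β) (U : Set α) :
    SimpleGraph (α × β) where
  Adj p q := (p.1 = q.1 ∧ p.1 ∈ U ∧ H.Adj p.2 q.2) ∨ (p.2 = q.2 ∧ G.Adj p.1 q.1)
  symm := by
    refine ⟨?_⟩; rintro p q (⟨h1, h2, h3⟩ | ⟨h1, h2⟩)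
    · exact Or.inl ⟨h1.symm, h1 ▸ h2, h3.symm⟩
    · exact Or.inr ⟨h1.symm, h2.symm⟩
  loopless := by
    refine ⟨?_⟩; rintro p (⟨_, _, h⟩ | ⟨_, h⟩)
    · exact H.loopless.irrefl _ h
    · exact G.loopless.irrefl _ h

/-- The F-index (forgotten topological index): sum of cubes of degrees. -/
def Findex {α : Type*} [Fintype α] (G : SimpleGraph α) : ℕ :=
  ∑ v, G.degree v ^ 3

/-- The first Zagreb index: sum of squares of degrees. -/
def M1 {α : Type*} [Fintype α] (G : SimpleGraph α) : ℕ :=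
  ∑ v, G.degree v ^ 2

/-- The general first Zagreb index with exponent `n`. -/
def xiIndex {α : Type*} [Fintype α] (G : SimpleGraph α) (n : ℕ) : ℕ :=
  ∑ v, G.degree v ^ n

/-- The redefined Zagreb index `ReZG(G) = Σ_{uv∈E} d(u)d(v)(d(u)+d(v))`. -/
def ReZG {α : Type*} [Fintype α] (G : SimpleGraph α) : ℕ :=
  ∑ e ∈ G.edgeFinset,
    Sym2.lift ⟨fun u v => G.degree u * G.degree v * (G.degree u + G.degree v),
      fun u v => by ring⟩ e

/-- The subdivision graph `S(G)`: each edge replaced by a path of length two. -/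
def Sgraph {α : Type*} (G : SimpleGraph α) : SimpleGraph (α ⊕ ↥G.edgeSet) where
  Adj x y :=
    match x, y with
    | Sum.inl u, Sum.inr e => u ∈ (e : Sym2 α)
    | Sum.inr e, Sum.inl u => u ∈ (e : Sym2 α)
    | _, _ => False
  symm := by refine ⟨?_⟩; rintro (u | e) (v | f) h <;> simp_all
  loopless := by refine ⟨?_⟩; rintro (u | e) h <;> simp_all

/-- The graph on `V(G) ⊕ E(G)` whose only edges are the original edges of `G`. -/
def Ograph {α : Type*} (G : SimpleGraph α) : SimpleGraph (α ⊕ ↥G.edgeSet) where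
  Adj x y :=
    match x, y with
    | Sum.inl u, Sum.inl v => G.Adj u v
    | _, _ => False
  symm := by refine ⟨?_⟩; rintro (u | e) (v | f) h <;> simp_all <;> exact h.symm
  loopless := by refine ⟨?_⟩; rintro (u | e) h <;> simp_all

/-- The graph on `V(G) ⊕ E(G)` whose edges join pairs of adjacent edges of `G`
(line-graph adjacency). -/
def Lgraph {α : Type*} (G : SimpleGraph α) : SimpleGraph (α ⊕ ↥G.edgeSet) where
  Adj x y :=
    match x, y with
    | Sum.inr e, Sum.inr f => e ≠ f ∧ ∃ u, u ∈ (e : Sym2 α) ∧ u ∈ (f : Sym2 α)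
    | _, _ => False
  symm := by
    refine ⟨?_⟩; rintro (u | e) (v | f) h <;> simp_all
    exact ⟨Ne.symm h.1, h.2.imp fun u hu => hu.symm⟩
  loopless := by refine ⟨?_⟩; rintro (u | e) h <;> simp_all

/-- The triangle parallel graph `R(G)`. -/
def Rgraph {α : Type*} (G : SimpleGraph α) : SimpleGraph (α ⊕ ↥G.edgeSet) :=
  Sgraph G ⊔ Ograph G

/-- The line superposition graph `Q(G)`. -/
def Qgraph {α : Type*} (G : SimpleGraph α) : SimpleGraph (α ⊕ ↥G.edgeSet) :=
  Sgraph G ⊔ Lgraph G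

/-- The total graph `T(G)`. -/
def Tgraph {α : Type*} (G : SimpleGraph α) : SimpleGraph (α ⊕ ↥G.edgeSet) :=
  Sgraph G ⊔ Ograph G ⊔ Lgraph G

/-- The F-sum `G +_F H`, where `K` is one of `S(G), R(G), Q(G), T(G)`:
the generalized hierarchical product `K(V(G))ΠH`. -/
def FSum {α β : Type*} {G : SimpleGraph α} (K : SimpleGraph (α ⊕ ↥G.edgeSet))
    (H : SimpleGraph β) : SimpleGraph ((α ⊕ ↥G.edgeSet) × β) :=
  hierProd K H (Set.range Sum.inl)

end

/-!
In `T(G)` a vertex `v` is adjacent to its `d(v)` neighbours and its `d(v)` incident edges, so it has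
degree `2 d(v)`; an edge `uv` is adjacent to `u`, `v` and the `d(u) - 1 + d(v) - 1` other edges at
its ends, so it has degree `d(u) + d(v)`. Expanding
`(d(u) + d(v))³ = d(u)³ + d(v)³ + 3 d(u) d(v) (d(u) + d(v))` and using the weighted handshake
identity `Σ_{uv ∈ E} (g(u) + g(v)) = Σ_v d(v) g(v)` with `g = d³` gives the formula.
-/

section TotalGraph

variable {α : Type*} (G : SimpleGraph α)

@[simp] lemma Tgraph_adj_inl_inl {u w : α} :
    (Tgraph G).Adj (Sum.inl u) (Sum.inl w) ↔ G.Adj u w := by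
  simp [Tgraph, Sgraph, Ograph, Lgraph]

@[simp] lemma Tgraph_adj_inl_inr {u : α} {f : G.edgeSet} :
    (Tgraph G).Adj (Sum.inl u) (Sum.inr f) ↔ u ∈ (f : Sym2 α) := by
  simp [Tgraph, Sgraph, Ograph, Lgraph]

@[simp] lemma Tgraph_adj_inr_inl {u : α} {f : G.edgeSet} :
    (Tgraph G).Adj (Sum.inr f) (Sum.inl u) ↔ u ∈ (f : Sym2 α) := by
  simp [Tgraph, Sgraph, Ograph, Lgraph]

@[simp] lemma Tgraph_adj_inr_inr {e f : G.edgeSet} :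
    (Tgraph G).Adj (Sum.inr e) (Sum.inr f) ↔ e ≠ f ∧ ∃ u ∈ (e : Sym2 α), u ∈ (f : Sym2 α) := by
  simp [Tgraph, Sgraph, Ograph, Lgraph]

variable [Fintype α]

noncomputable def incidentEdges (v : α) : Finset G.edgeSet :=
  (G.incidenceFinset v).subtype (· ∈ G.edgeSet)

variable {G}

@[simp] lemma mem_incidentEdges {v : α} {f : G.edgeSet} :
    f ∈ incidentEdges G v ↔ v ∈ (f : Sym2 α) := by
  simp [incidentEdges, mem_incidenceFinset, incidenceSet, f.2]

lemma card_incidentEdges (v : α) : #(incidentEdges G v) = G.degree v := by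
  rw [incidentEdges, card_subtype, filter_true_of_mem fun e he ↦ G.incidenceSet_subset v
    ((mem_incidenceFinset _ _ _).1 he), card_incidenceFinset_eq_degree]

lemma neighborFinset_Tgraph_inl (v : α) :
    (Tgraph G).neighborFinset (Sum.inl v) = (G.neighborFinset v).disjSum (incidentEdges G v) := by
  ext (w | f) <;> simp

lemma degree_Tgraph_inl (v : α) : (Tgraph G).degree (Sum.inl v) = 2 * G.degree v := by
  rw [← card_neighborFinset_eq_degree, neighborFinset_Tgraph_inl, card_disjSum,
    card_neighborFinset_eq_degree, card_incidentEdges, two_mul]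

lemma neighborFinset_Tgraph_inr {u v : α} (huv : G.Adj u v) :
    (Tgraph G).neighborFinset (Sum.inr ⟨s(u, v), huv⟩) =
      ({u, v} : Finset α).disjSum
        ((incidentEdges G u).erase ⟨s(u, v), huv⟩ ∪ (incidentEdges G v).erase ⟨s(u, v), huv⟩) := by
  ext (w | f)
  · simp
  · simp [← and_or_left, eq_comm]

lemma disjoint_erase_incidentEdges {u v : α} (huv : G.Adj u v) :
    Disjoint ((incidentEdges G u).erase ⟨s(u, v), huv⟩)
      ((incidentEdges G v).erase ⟨s(u, v), huv⟩) := by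
  rw [Finset.disjoint_left]
  intro f hfu hfv
  simp only [mem_erase, mem_incidentEdges] at hfu hfv
  exact hfu.1 (Subtype.ext ((Sym2.mem_and_mem_iff huv.ne).1 ⟨hfu.2, hfv.2⟩))

lemma degree_Tgraph_inr (e : G.edgeSet) :
    (Tgraph G).degree (Sum.inr e) =
      Sym2.lift ⟨fun u v ↦ G.degree u + G.degree v, fun _ _ ↦ add_comm _ _⟩ e := by
  obtain ⟨e, he⟩ := e
  induction e using Sym2.ind with
  | _ u v =>
    have hu : #((incidentEdges G u).erase ⟨s(u, v), he⟩) + 1 = G.degree u := by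
      rw [card_erase_add_one (by simp), card_incidentEdges]
    have hv : #((incidentEdges G v).erase ⟨s(u, v), he⟩) + 1 = G.degree v := by
      rw [card_erase_add_one (by simp), card_incidentEdges]
    rw [← card_neighborFinset_eq_degree, neighborFinset_Tgraph_inr he, card_disjSum,
      card_union_of_disjoint (disjoint_erase_incidentEdges he), card_pair he.ne, Sym2.lift_mk]
    dsimp only
    omega

end TotalGraph

section WeightedHandshake

variable {α M : Type*} [Fintype α] [AddCommMonoid M] (G : SimpleGraph α)

lemma sum_edgeFinset_lift_add (f : α → M) :
    ∑ e ∈ G.edgeFinset, Sym2.lift ⟨fun u v ↦ f u + f v, fun _ _ ↦ add_comm _ _⟩ e =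
      ∑ v, G.degree v • f v := by
  have hswap : ∑ v, ∑ _e ∈ G.incidenceFinset v, f v = ∑ e ∈ G.edgeFinset, ∑ v ∈ e.toFinset, f v :=
    sum_comm' fun v e ↦ by simp [incidenceFinset_eq_filter, and_comm]
  simp_rw [← card_incidenceFinset_eq_degree, ← sum_const, hswap]
  refine sum_congr rfl fun e he ↦ ?_
  induction e using Sym2.ind with
  | _ u v => rw [Sym2.toFinset_mk_eq, sum_pair (G.ne_of_adj (mem_edgeFinset.1 he)), Sym2.lift_mk]

end WeightedHandshake

lemma Sym2.lift_add_pow_three {α R : Type*} [CommSemiring R] (f : α → R) (e : Sym2 α) :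
    Sym2.lift ⟨fun u v ↦ f u + f v, fun _ _ ↦ add_comm _ _⟩ e ^ 3 =
      Sym2.lift ⟨fun u v ↦ f u ^ 3 + f v ^ 3, fun _ _ ↦ add_comm _ _⟩ e +
        3 * Sym2.lift ⟨fun u v ↦ f u * f v * (f u + f v), fun _ _ ↦ by ring⟩ e := by
  induction e using Sym2.ind with
  | _ u v => simp only [Sym2.lift_mk]; ring

lemma Findex_Tgraph_eq_sum {α : Type*} [Fintype α] (G : SimpleGraph α) :
    Findex (Tgraph G) = ∑ v, (2 * G.degree v) ^ 3 + ∑ e ∈ G.edgeFinset,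
      Sym2.lift ⟨fun u v ↦ G.degree u + G.degree v, fun _ _ ↦ add_comm _ _⟩ e ^ 3 := by
  simp_rw [Findex, Fintype.sum_sum_type, degree_Tgraph_inl, degree_Tgraph_inr]
  congr 1
  exact (sum_subtype G.edgeFinset (fun _ ↦ mem_edgeFinset)
    fun e ↦ Sym2.lift ⟨fun u v ↦ G.degree u + G.degree v, fun _ _ ↦ add_comm _ _⟩ e ^ 3).symm

theorem Findex_Tgraph {α : Type*} [Fintype α] (G : SimpleGraph α) :
    Findex (Tgraph G) = 8 * Findex G + xiIndex G 4 + 3 * ReZG G := by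
  have hvertices : ∑ v, (2 * G.degree v) ^ 3 = 8 * Findex G := by
    simp_rw [Findex, mul_sum, mul_pow]
    norm_num
  have hfourth : ∑ v, G.degree v • G.degree v ^ 3 = xiIndex G 4 := by
    simp_rw [xiIndex, smul_eq_mul, ← pow_succ']
  rw [Findex_Tgraph_eq_sum, ReZG, mul_sum]
  simp_rw [Sym2.lift_add_pow_three, sum_add_distrib, sum_edgeFinset_lift_add, hvertices, hfourth,
    add_assoc]
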